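/- arXiv:2510.16132 — 3 statements merged into one kernel-verified Lean document; each statement's English description precedes it below -/
import Mathlib

section
/- Let π_b be a policy with π_{b,min} := min_{s,a} π_b(a|s) > 0, let μ_{π_b} be a stationary distribution of the induced state chain P_{π_b} with μ_{π_b,min} := min_s μ_{π_b}(s) > 0, and suppose there are an integer r_b ≥ 1 and δ_b ∈ (0,1] such that the lazy matrix 𝒫_{π_b} = (P_{π_b} + I)/2 satisfies (𝒫_{π_b})^{r_b}(s,s') ≥ δ_b for all s, s' ∈ S. Let π be any policy with π_min := min_{s,a} π(a|s) > 0, and let μ̄_π be a stationary distribution of the induced state–action chain P̄_π. Set θ := (1/2) δ_b π_min^{r_b+1} μ_{π_b,min} π_{b,min}, C̄ := (1 − θ)^{-1}, and ρ̄ := (1 − θ)^{1/(r_b+1)}. Then for every integer k ≥ 0: max_{(s,a)} (1/2) Σ_{(s',a')} |(𝒫̄_π)^k((s,a),(s',a')) − μ̄_π(s',a')| ≤ C̄ ρ̄^k, where 𝒫̄_π = (P̄_π + I)/2. -/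
section

variable {S A : Type*} [Fintype S] [Fintype A] [Nonempty S] [Nonempty A]
  [DecidableEq S] [DecidableEq A]

/-- The state chain induced by a policy: `P_π(s,s') = Σ_a π(a|s) p(s'|s,a)`. -/
noncomputable def inducedChain (p : S × A → S → ℝ) (π : S → A → ℝ) :
    Matrix S S ℝ :=
  Matrix.of fun s s' => ∑ a, π s a * p (s, a) s'

/-- The state–action chain induced by a policy:
`P̄_π((s,a),(s',a')) = p(s'|s,a) π(a'|s')`. -/
noncomputable def saChain (p : S × A → S → ℝ) (π : S → A → ℝ) :
    Matrix (S × A) (S × A) ℝ :=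
  Matrix.of fun y y' => p y y'.1 * π y'.1 y'.2

/-- The lazy matrix `𝒫 = (P + I)/2`. -/
noncomputable def lazy {X : Type*} [Fintype X] [DecidableEq X]
    (P : Matrix X X ℝ) : Matrix X X ℝ :=
  (2⁻¹ : ℝ) • (P + 1)

lemma aux_pow_nonneg {X : Type*} [Fintype X] [DecidableEq X]
    (M : Matrix X X ℝ) (h0 : ∀ x x', 0 ≤ M x x') (k : ℕ) :
    ∀ x x', 0 ≤ (M ^ k) x x' := by
  induction k with
  | zero =>
    intro x x'
    rw [pow_zero]
    by_cases h : x = x' <;> simp [Matrix.one_apply, h]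
  | succ k ih =>
    intro x x'
    rw [pow_succ, Matrix.mul_apply]
    exact Finset.sum_nonneg fun z _ => mul_nonneg (ih x z) (h0 z x')

lemma aux_pow_rowsum {X : Type*} [Fintype X] [DecidableEq X]
    (M : Matrix X X ℝ) (h1 : ∀ x, ∑ x', M x x' = 1) (k : ℕ) :
    ∀ x, ∑ x', (M ^ k) x x' = 1 := by
  induction k with
  | zero => intro x; simp [Matrix.one_apply]
  | succ k ih =>
    intro x
    rw [pow_succ]
    simp only [Matrix.mul_apply]
    rw [Finset.sum_comm]
    simp_rw [← Finset.mul_sum, h1, mul_one]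
    exact ih x

lemma aux_pow_mono {X : Type*} [Fintype X] [DecidableEq X]
    (Mb Ma : Matrix X X ℝ)
    (h0 : ∀ x x', 0 ≤ Mb x x') (hle : ∀ x x', Mb x x' ≤ Ma x x') (k : ℕ) :
    ∀ x x', (Mb ^ k) x x' ≤ (Ma ^ k) x x' := by
  induction k with
  | zero => intro x x'; rw [pow_zero, pow_zero]
  | succ k ih =>
    intro x x'
    rw [pow_succ, pow_succ, Matrix.mul_apply, Matrix.mul_apply]
    refine Finset.sum_le_sum fun z _ => ?_
    exact mul_le_mul (ih x z) (hle z x') (h0 z x')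
      (le_trans (aux_pow_nonneg Mb h0 k x z) (ih x z))

lemma aux_contract {X : Type*} [Fintype X] (M : Matrix X X ℝ) (ε : ℝ)
    (hM : ∀ x x', ε ≤ M x x') (hrow : ∀ x, ∑ x', M x x' = 1)
    (v : X → ℝ) (hv : ∑ x, v x = 0) :
    ∑ x', |∑ x, v x * M x x'| ≤ (1 - ε * Fintype.card X) * ∑ x, |v x| := by
  have key : ∀ x', |∑ x, v x * M x x'| ≤ ∑ x, |v x| * (M x x' - ε) := by
    intro x'
    have e1 : ∑ x, v x * M x x' = ∑ x, v x * (M x x' - ε) := by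
      simp [mul_sub, Finset.sum_sub_distrib, ← Finset.sum_mul, hv]
    rw [e1]
    calc |∑ x, v x * (M x x' - ε)| ≤ ∑ x, |v x * (M x x' - ε)| :=
          Finset.abs_sum_le_sum_abs _ _
    _ = ∑ x, |v x| * (M x x' - ε) := by
        refine Finset.sum_congr rfl fun x _ => ?_
        rw [abs_mul, abs_of_nonneg (sub_nonneg.2 (hM x x'))]
  calc ∑ x', |∑ x, v x * M x x'| ≤ ∑ x', ∑ x, |v x| * (M x x' - ε) :=
        Finset.sum_le_sum fun x' _ => key x'
  _ = ∑ x, |v x| * (1 - ε * Fintype.card X) := by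
      rw [Finset.sum_comm]
      refine Finset.sum_congr rfl fun x _ => ?_
      rw [← Finset.mul_sum]
      congr 1
      rw [Finset.sum_sub_distrib, hrow x]
      simp [Finset.card_univ, mul_comm]
  _ = (1 - ε * Fintype.card X) * ∑ x, |v x| := by rw [← Finset.sum_mul, mul_comm]


set_option maxHeartbeats 4000000 in
/-- Explicit mixing parameters `(C̄, ρ̄)` for the lazy state–action chain of any
strictly positive policy `π`. -/
theorem stmt_9
    (p : S × A → S → ℝ)
    (hp0 : ∀ sa s', 0 ≤ p sa s')
    (hp1 : ∀ sa, ∑ s', p sa s' = 1)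
    (πb : S → A → ℝ)
    (hπb0 : ∀ s a, 0 < πb s a) (hπb1 : ∀ s, ∑ a, πb s a = 1)
    (μb : S → ℝ) (hμb0 : ∀ s, 0 < μb s) (hμb1 : ∑ s, μb s = 1)
    (hstatb : ∀ s', ∑ s, μb s * inducedChain p πb s s' = μb s')
    (rb : ℕ) (hrb : 1 ≤ rb)
    (δb : ℝ) (hδb0 : 0 < δb) (hδb1 : δb ≤ 1)
    (hδ : ∀ s s' : S, δb ≤ (lazy (inducedChain p πb) ^ rb) s s')
    (π : S → A → ℝ)
    (hπ0 : ∀ s a, 0 < π s a) (hπ1 : ∀ s, ∑ a, π s a = 1)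
    (μπ : S × A → ℝ) (hμπ0 : ∀ y, 0 ≤ μπ y) (hμπ1 : ∑ y, μπ y = 1)
    (hstat : ∀ y', ∑ y, μπ y * saChain p π y y' = μπ y')
    (πmin πbmin μbmin θ Cbar ρbar : ℝ)
    (hπmin : πmin = Finset.univ.inf' Finset.univ_nonempty fun sa : S × A => π sa.1 sa.2)
    (hπbmin : πbmin = Finset.univ.inf' Finset.univ_nonempty fun sa : S × A => πb sa.1 sa.2)
    (hμbmin : μbmin = Finset.univ.inf' Finset.univ_nonempty fun s => μb s)
    (hθ : θ = 2⁻¹ * δb * πmin ^ (rb + 1) * μbmin * πbmin)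
    (hCbar : Cbar = (1 - θ)⁻¹)
    (hρbar : ρbar = (1 - θ) ^ ((1 : ℝ) / ((rb : ℝ) + 1))) :
    ∀ k : ℕ, ∀ y : S × A,
      (2⁻¹ : ℝ) * ∑ y', |((lazy (saChain p π)) ^ k) y y' - μπ y'| ≤
        Cbar * ρbar ^ k := by
  classical
  set m : ℕ := rb + 1 with hm
  set Q : Matrix (S × A) (S × A) ℝ := lazy (saChain p π) with hQdef
  set Pπ : Matrix S S ℝ := lazy (inducedChain p π) with hPπdef
  set Pb : Matrix S S ℝ := lazy (inducedChain p πb) with hPbdef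
  -- basic bounds
  have hπmin_le : ∀ s a, πmin ≤ π s a := fun s a =>
    hπmin ▸ Finset.inf'_le _ (Finset.mem_univ (s, a))
  have hπmin_pos : 0 < πmin := by
    rw [hπmin]
    exact (Finset.lt_inf'_iff _).2 fun b _ => hπ0 b.1 b.2
  have hπle1 : ∀ s a, π s a ≤ 1 := by
    intro s a
    calc π s a ≤ ∑ a', π s a' :=
          Finset.single_le_sum (fun a' _ => (hπ0 s a').le) (Finset.mem_univ a)
    _ = 1 := hπ1 s
  have hπble1 : ∀ s a, πb s a ≤ 1 := by
    intro s a
    calc πb s a ≤ ∑ a', πb s a' :=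
          Finset.single_le_sum (fun a' _ => (hπb0 s a').le) (Finset.mem_univ a)
    _ = 1 := hπb1 s
  have hπmin1 : πmin ≤ 1 := by
    obtain ⟨s⟩ := (inferInstance : Nonempty S)
    obtain ⟨a⟩ := (inferInstance : Nonempty A)
    exact (hπmin_le s a).trans (hπle1 s a)
  have hπbmin_pos : 0 < πbmin := by
    rw [hπbmin]
    exact (Finset.lt_inf'_iff _).2 fun b _ => hπb0 b.1 b.2
  have hπbmin1 : πbmin ≤ 1 := by
    obtain ⟨s⟩ := (inferInstance : Nonempty S)
    obtain ⟨a⟩ := (inferInstance : Nonempty A)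
    refine le_trans (hπbmin ▸ Finset.inf'_le _ (Finset.mem_univ (s, a))) (hπble1 s a)
  have hμbmin_pos : 0 < μbmin := by
    rw [hμbmin]
    exact (Finset.lt_inf'_iff _).2 fun b _ => hμb0 b
  have hμbmin1 : μbmin ≤ 1 := by
    obtain ⟨s⟩ := (inferInstance : Nonempty S)
    refine le_trans (hμbmin ▸ Finset.inf'_le _ (Finset.mem_univ s)) ?_
    calc μb s ≤ ∑ s', μb s' :=
          Finset.single_le_sum (fun s' _ => (hμb0 s').le) (Finset.mem_univ s)
    _ = 1 := hμb1
  -- Q entries and rows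
  have hQ0 : ∀ y y', 0 ≤ Q y y' := by
    intro y y'
    have : Q y y' = 2⁻¹ * (p y y'.1 * π y'.1 y'.2 + (1 : Matrix (S × A) (S × A) ℝ) y y') := by
      simp [hQdef, lazy, saChain, Matrix.add_apply]; ring
    rw [this]
    have h1 : (0:ℝ) ≤ (1 : Matrix (S × A) (S × A) ℝ) y y' := by
      by_cases h : y = y' <;> simp [Matrix.one_apply, h]
    have := mul_nonneg (hp0 y y'.1) (hπ0 y'.1 y'.2).le
    positivity
  have hQrow : ∀ y, ∑ y', Q y y' = 1 := by
    intro y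
    have e : ∀ y' : S × A, Q y y' =
        2⁻¹ * (p y y'.1 * π y'.1 y'.2) + 2⁻¹ * (1 : Matrix (S × A) (S × A) ℝ) y y' := by
      intro y'
      simp [hQdef, lazy, saChain, Matrix.add_apply, mul_add]
    simp_rw [e]
    rw [Finset.sum_add_distrib, ← Finset.mul_sum, ← Finset.mul_sum]
    have e1 : ∑ y' : S × A, p y y'.1 * π y'.1 y'.2 = 1 := by
      rw [Fintype.sum_prod_type]
      simp_rw [← Finset.mul_sum, hπ1, mul_one]
      exact hp1 y
    have e2 : ∑ y' : S × A, (1 : Matrix (S × A) (S × A) ℝ) y y' = 1 := by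
      simp [Matrix.one_apply]
    rw [e1, e2]
    norm_num
  -- stationarity of μπ for Q and its powers
  have hstatQ : ∀ y', ∑ y, μπ y * Q y y' = μπ y' := by
    intro y'
    have e : ∀ y : S × A, μπ y * Q y y' =
        2⁻¹ * (μπ y * saChain p π y y') + 2⁻¹ * (μπ y * (1 : Matrix (S × A) (S × A) ℝ) y y') := by
      intro y
      simp [hQdef, lazy, Matrix.add_apply]
      ring
    simp_rw [e]
    rw [Finset.sum_add_distrib, ← Finset.mul_sum, ← Finset.mul_sum, hstat]
    have e2 : ∑ y, μπ y * (1 : Matrix (S × A) (S × A) ℝ) y y' = μπ y' := by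
      simp [Matrix.one_apply]
    rw [e2]
    ring
  have hstatK : ∀ j y', ∑ y, μπ y * (Q ^ j) y y' = μπ y' := by
    intro j
    induction j with
    | zero => intro y'; simp [Matrix.one_apply]
    | succ j ih =>
      intro y'
      rw [pow_succ']
      simp only [Matrix.mul_apply]
      calc ∑ y'', μπ y'' * ∑ z, Q y'' z * (Q ^ j) z y'
          = ∑ z, (∑ y'', μπ y'' * Q y'' z) * (Q ^ j) z y' := by
            simp_rw [Finset.mul_sum]
            rw [Finset.sum_comm]
            simp_rw [Finset.sum_mul]
            exact Finset.sum_congr rfl fun z _ => Finset.sum_congr rfl fun y'' _ => by ring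
      _ = ∑ z, μπ z * (Q ^ j) z y' := by simp_rw [hstatQ]
      _ = μπ y' := ih y'
  -- D and E matrices
  set Dm : Matrix (S × A) S ℝ := Matrix.of (fun y s' => p y s') with hDm
  set Em : Matrix S (S × A) ℝ := Matrix.of (fun s y => if y.1 = s then π y.1 y.2 else 0) with hEm
  have hDE : saChain p π = Dm * Em := by
    ext y y'
    simp only [saChain, Matrix.of_apply, Matrix.mul_apply, hDm, hEm, mul_ite, mul_zero]
    rw [Finset.sum_ite_eq Finset.univ y'.1 (fun t => p y t * π y'.1 y'.2)]
    simp [mul_comm]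
  have hED : inducedChain p π = Em * Dm := by
    ext s s'
    simp only [inducedChain, Matrix.of_apply, Matrix.mul_apply, hDm, hEm]
    rw [Fintype.sum_prod_type]
    simp only [ite_mul, zero_mul]
    rw [Finset.sum_comm]
    simp only [Finset.sum_ite_eq' Finset.univ s, Finset.mem_univ, if_true]
  have hQD : Q * Dm = Dm * Pπ := by
    show ((2⁻¹ : ℝ) • (saChain p π + 1)) * Dm = Dm * ((2⁻¹ : ℝ) • (inducedChain p π + 1))
    rw [hDE, hED, Matrix.smul_mul, Matrix.mul_smul, Matrix.add_mul, Matrix.mul_add,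
      Matrix.one_mul, Matrix.mul_one, Matrix.mul_assoc]
  -- minorization
  have hminor : ∀ n, ∀ y y' : S × A,
      ((2⁻¹ : ℝ) • (Dm * (Pπ ^ n) * Em)) y y' ≤ (Q ^ (n + 1)) y y' := by
    intro n
    induction n with
    | zero =>
      intro y y'
      rw [pow_zero, pow_one, Matrix.mul_one]
      have e : Q y y' = 2⁻¹ * ((Dm * Em) y y' + (1 : Matrix (S × A) (S × A) ℝ) y y') := by
        rw [← hDE]
        simp [hQdef, lazy, Matrix.add_apply]; ring
      rw [e, Matrix.smul_apply, smul_eq_mul]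
      have h1 : (0:ℝ) ≤ (1 : Matrix (S × A) (S × A) ℝ) y y' := by
        by_cases h : y = y' <;> simp [Matrix.one_apply, h]
      nlinarith
    | succ n ih =>
      intro y y'
      have e : Q ^ (n + 2) = Q * Q ^ (n + 1) := pow_succ' Q (n + 1)
      have e2 : (2⁻¹ : ℝ) • (Dm * Pπ ^ (n + 1) * Em) =
          Q * ((2⁻¹ : ℝ) • (Dm * Pπ ^ n * Em)) := by
        rw [Matrix.mul_smul]
        congr 1
        rw [pow_succ', ← Matrix.mul_assoc Dm Pπ (Pπ ^ n), ← hQD,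
          Matrix.mul_assoc (Q * Dm) (Pπ ^ n) Em, Matrix.mul_assoc Q Dm (Pπ ^ n * Em),
          Matrix.mul_assoc Dm (Pπ ^ n) Em]
      rw [e, e2, Matrix.mul_apply, Matrix.mul_apply]
      exact Finset.sum_le_sum fun z _ => mul_le_mul_of_nonneg_left (ih z y') (hQ0 y z)
  -- entrywise comparison Pπ ≥ πmin • Pb
  have hPb0 : ∀ s s', 0 ≤ Pb s s' := by
    intro s s'
    have e : Pb s s' = 2⁻¹ * ((∑ a, πb s a * p (s, a) s') + (1 : Matrix S S ℝ) s s') := by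
      simp [hPbdef, lazy, inducedChain, Matrix.add_apply]; ring
    rw [e]
    have h1 : (0:ℝ) ≤ (1 : Matrix S S ℝ) s s' := by
      by_cases h : s = s' <;> simp [Matrix.one_apply, h]
    have h2 : (0:ℝ) ≤ ∑ a, πb s a * p (s, a) s' :=
      Finset.sum_nonneg fun a _ => mul_nonneg (hπb0 s a).le (hp0 _ _)
    positivity
  have hPbPπ : ∀ s s', (πmin • Pb) s s' ≤ Pπ s s' := by
    intro s s'
    have e1 : (πmin • Pb) s s' =
        πmin * (2⁻¹ * ((∑ a, πb s a * p (s, a) s') + (1 : Matrix S S ℝ) s s')) := by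
      simp only [Matrix.smul_apply, smul_eq_mul, hPbdef, lazy, inducedChain,
        Matrix.add_apply, Matrix.of_apply]
    have e2 : Pπ s s' = 2⁻¹ * ((∑ a, π s a * p (s, a) s') + (1 : Matrix S S ℝ) s s') := by
      simp [hPπdef, lazy, inducedChain, Matrix.add_apply]; ring
    rw [e1, e2]
    have hsum : πmin * (∑ a, πb s a * p (s, a) s') ≤ ∑ a, π s a * p (s, a) s' := by
      rw [Finset.mul_sum]
      refine Finset.sum_le_sum fun a _ => ?_
      have h1 : πmin * (πb s a * p (s, a) s') ≤ πmin * p (s, a) s' := by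
        refine mul_le_mul_of_nonneg_left ?_ hπmin_pos.le
        nlinarith [hp0 (s, a) s', hπble1 s a, hπb0 s a]
      exact h1.trans (mul_le_mul_of_nonneg_right (hπmin_le s a) (hp0 _ _))
    have h1 : (0:ℝ) ≤ (1 : Matrix S S ℝ) s s' := by
      by_cases h : s = s' <;> simp [Matrix.one_apply, h]
    have hid : πmin * (1 : Matrix S S ℝ) s s' ≤ (1 : Matrix S S ℝ) s s' :=
      mul_le_of_le_one_left h1 hπmin1
    calc πmin * (2⁻¹ * ((∑ a, πb s a * p (s, a) s') + (1 : Matrix S S ℝ) s s'))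
        = 2⁻¹ * (πmin * (∑ a, πb s a * p (s, a) s') + πmin * (1 : Matrix S S ℝ) s s') := by
          ring
    _ ≤ 2⁻¹ * ((∑ a, π s a * p (s, a) s') + (1 : Matrix S S ℝ) s s') := by
        refine mul_le_mul_of_nonneg_left (add_le_add hsum hid) (by norm_num)
  have hPπrb : ∀ s s', πmin ^ rb * δb ≤ (Pπ ^ rb) s s' := by
    intro s s'
    have h1 : ((πmin • Pb) ^ rb) s s' ≤ (Pπ ^ rb) s s' := by
      refine aux_pow_mono _ _ (fun x x' => ?_) hPbPπ rb s s'
      simp only [Matrix.smul_apply, smul_eq_mul]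
      exact mul_nonneg hπmin_pos.le (hPb0 x x')
    have h2 : ((πmin • Pb) ^ rb) s s' = πmin ^ rb * (Pb ^ rb) s s' := by
      rw [smul_pow, Matrix.smul_apply, smul_eq_mul]
    have h3 : πmin ^ rb * δb ≤ πmin ^ rb * (Pb ^ rb) s s' :=
      mul_le_mul_of_nonneg_left (hδ s s') (pow_nonneg hπmin_pos.le rb)
    rw [← h2] at h3
    exact h3.trans h1
  -- entry lower bound on Q^m
  set c : ℝ := 2⁻¹ * δb * πmin ^ m with hc
  have hcQ : ∀ y y' : S × A, c ≤ (Q ^ m) y y' := by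
    intro y y'
    refine le_trans ?_ (hminor rb y y')
    rw [Matrix.smul_apply, smul_eq_mul]
    have hEnt : ∀ t, πmin ^ rb * δb * πmin ≤ (Pπ ^ rb * Em) t y' := by
      intro t
      rw [Matrix.mul_apply]
      have e : ∑ u, (Pπ ^ rb) t u * Em u y' = (Pπ ^ rb) t y'.1 * π y'.1 y'.2 := by
        simp only [hEm, Matrix.of_apply, mul_ite, mul_zero]
        rw [Finset.sum_ite_eq Finset.univ y'.1 (fun u => (Pπ ^ rb) t u * π y'.1 y'.2)]
        simp
      rw [e]
      refine mul_le_mul (hPπrb t y'.1) (hπmin_le y'.1 y'.2) hπmin_pos.le ?_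
      exact le_trans (by positivity) (hPπrb t y'.1)
    have e3 : (Dm * (Pπ ^ rb) * Em) y y' = ∑ t, p y t * (Pπ ^ rb * Em) t y' := by
      rw [Matrix.mul_assoc, Matrix.mul_apply]
      simp [hDm]
    have h4 : δb * πmin ^ m ≤ (Dm * (Pπ ^ rb) * Em) y y' := by
      rw [e3]
      calc δb * πmin ^ m = ∑ t, p y t * (πmin ^ rb * δb * πmin) := by
            rw [← Finset.sum_mul, hp1 y, one_mul, hm, pow_succ]
            ring
      _ ≤ ∑ t, p y t * (Pπ ^ rb * Em) t y' :=
            Finset.sum_le_sum fun t _ => mul_le_mul_of_nonneg_left (hEnt t) (hp0 y t)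
    calc c = 2⁻¹ * (δb * πmin ^ m) := by rw [hc]; ring
    _ ≤ 2⁻¹ * (Dm * (Pπ ^ rb) * Em) y y' :=
        mul_le_mul_of_nonneg_left h4 (by norm_num)
  -- θ bounds
  have hc0 : 0 ≤ c := by
    rw [hc]; positivity
  have hθ0 : 0 < θ := by
    rw [hθ]; positivity
  have hθhalf : θ ≤ 2⁻¹ := by
    have h1 : πmin ^ m ≤ 1 := pow_le_one₀ hπmin_pos.le hπmin1
    have h2 : (0:ℝ) ≤ πmin ^ m := by positivity
    have h3 : δb * πmin ^ m ≤ 1 := mul_le_one₀ hδb1 h2 h1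
    have h4 : δb * πmin ^ m * μbmin ≤ 1 := mul_le_one₀ h3 hμbmin_pos.le hμbmin1
    have h5 : δb * πmin ^ m * μbmin * πbmin ≤ 1 := mul_le_one₀ h4 hπbmin_pos.le hπbmin1
    calc θ = 2⁻¹ * (δb * πmin ^ m * μbmin * πbmin) := by rw [hθ]; ring
    _ ≤ 2⁻¹ * 1 := mul_le_mul_of_nonneg_left h5 (by norm_num)
    _ = 2⁻¹ := mul_one _
  have hθ1 : θ < 1 := by linarith
  have hb0 : (0:ℝ) < 1 - θ := by linarith
  have hb1 : 1 - θ < 1 := by linarith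
  have hθcN : θ ≤ c * (Fintype.card (S × A) : ℝ) := by
    have hN : (1:ℝ) ≤ (Fintype.card (S × A) : ℝ) := by
      have := Fintype.card_pos (α := S × A)
      exact_mod_cast this
    have h1 : θ ≤ c := by
      have hx0 : (0:ℝ) ≤ 2⁻¹ * δb * πmin ^ m :=
        mul_nonneg (mul_nonneg (by norm_num) hδb0.le) (pow_nonneg hπmin_pos.le m)
      have hx1 : (0:ℝ) ≤ 2⁻¹ * δb * πmin ^ m * μbmin := mul_nonneg hx0 hμbmin_pos.le
      calc θ = 2⁻¹ * δb * πmin ^ m * μbmin * πbmin := hθ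
      _ ≤ 2⁻¹ * δb * πmin ^ m * μbmin := mul_le_of_le_one_right hx1 hπbmin1
      _ ≤ 2⁻¹ * δb * πmin ^ m := mul_le_of_le_one_right hx0 hμbmin1
      _ = c := hc.symm
    calc θ ≤ c := h1
    _ ≤ c * (Fintype.card (S × A) : ℝ) := le_mul_of_one_le_right hc0 hN
  -- contraction machinery
  intro k y
  set f : ℕ → ℝ := fun j => ∑ y', |(Q ^ j) y y' - μπ y'| with hf
  have hf_nonneg : ∀ j, 0 ≤ f j := fun j => Finset.sum_nonneg fun y' _ => abs_nonneg _
  have hgrec : ∀ i j y', (Q ^ (i + j)) y y' - μπ y' =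
      ∑ z, ((Q ^ i) y z - μπ z) * (Q ^ j) z y' := by
    intro i j y'
    rw [pow_add, Matrix.mul_apply]
    simp only [sub_mul]
    rw [Finset.sum_sub_distrib, hstatK j y']
  have hsum0 : ∀ i, ∑ y', ((Q ^ i) y y' - μπ y') = 0 := by
    intro i
    rw [Finset.sum_sub_distrib, aux_pow_rowsum Q hQrow i y, hμπ1, sub_self]
  have hf_succ : ∀ i, f (i + 1) ≤ f i := by
    intro i
    have hQ1row : ∀ x, ∑ x', (Q ^ 1) x x' = 1 := aux_pow_rowsum Q hQrow 1
    have hQ10 : ∀ x x', (0:ℝ) ≤ (Q ^ 1) x x' := aux_pow_nonneg Q hQ0 1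
    have := aux_contract (Q ^ 1) 0 hQ10 hQ1row (fun z => (Q ^ i) y z - μπ z) (hsum0 i)
    simp only [zero_mul, sub_zero, one_mul] at this
    calc f (i + 1) = ∑ y', |∑ z, ((Q ^ i) y z - μπ z) * (Q ^ 1) z y'| := by
          refine Finset.sum_congr rfl fun y' _ => ?_
          rw [hgrec i 1 y']
    _ ≤ ∑ z, |(Q ^ i) y z - μπ z| := this
    _ = f i := rfl
  have hf_m : ∀ i, f (i + m) ≤ (1 - θ) * f i := by
    intro i
    have hQmrow : ∀ x, ∑ x', (Q ^ m) x x' = 1 := aux_pow_rowsum Q hQrow m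
    have := aux_contract (Q ^ m) c hcQ hQmrow (fun z => (Q ^ i) y z - μπ z) (hsum0 i)
    have e : f (i + m) = ∑ y', |∑ z, ((Q ^ i) y z - μπ z) * (Q ^ m) z y'| := by
      refine Finset.sum_congr rfl fun y' _ => ?_
      rw [hgrec i m y']
    rw [e]
    refine le_trans this ?_
    have h1 : 1 - c * (Fintype.card (S × A) : ℝ) ≤ 1 - θ := by linarith
    exact mul_le_mul_of_nonneg_right h1 (hf_nonneg i)
  have hf2 : ∀ i, f i ≤ 2 := by
    have h0 : f 0 ≤ 2 := by
      have e : ∀ y' : S × A, |(Q ^ 0) y y' - μπ y'| ≤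
          (if y = y' then (1:ℝ) else 0) + μπ y' := by
        intro y'
        rw [pow_zero, Matrix.one_apply]
        calc |(if y = y' then (1:ℝ) else 0) - μπ y'|
            ≤ |(if y = y' then (1:ℝ) else 0)| + |μπ y'| := abs_sub _ _
        _ = (if y = y' then (1:ℝ) else 0) + μπ y' := by
            rw [abs_of_nonneg (hμπ0 y'), abs_of_nonneg]
            by_cases h : y = y' <;> simp [h]
      calc f 0 ≤ ∑ y', ((if y = y' then (1:ℝ) else 0) + μπ y') :=
            Finset.sum_le_sum fun y' _ => e y'
      _ = 1 + 1 := by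
          rw [Finset.sum_add_distrib, hμπ1, Finset.sum_ite_eq Finset.univ y (fun _ => (1:ℝ))]
          simp
      _ = 2 := by norm_num
    intro i
    induction i with
    | zero => exact h0
    | succ i ih => exact (hf_succ i).trans ih
  have hmain : ∀ q r, f (q * m + r) ≤ 2 * (1 - θ) ^ q := by
    intro q
    induction q with
    | zero => intro r; simpa using hf2 r
    | succ q ih =>
      intro r
      have e : (q + 1) * m + r = (q * m + r) + m := by ring
      rw [e]
      calc f ((q * m + r) + m) ≤ (1 - θ) * f (q * m + r) := hf_m _
      _ ≤ (1 - θ) * (2 * (1 - θ) ^ q) := mul_le_mul_of_nonneg_left (ih r) hb0.le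
      _ = 2 * (1 - θ) ^ (q + 1) := by ring
  have hfk : f k ≤ 2 * (1 - θ) ^ (k / m) := by
    have e : k / m * m + k % m = k := Nat.div_add_mod' k m
    have := hmain (k / m) (k % m)
    rwa [e] at this
  -- final real-power computation
  have hm0 : 0 < m := by omega
  have hmR : ((m : ℝ)) = (rb : ℝ) + 1 := by rw [hm]; push_cast; ring
  have hklt : (k : ℝ) < (m : ℝ) * ((k / m : ℕ) : ℝ) + (m : ℝ) := by
    have h1 : k < m * (k / m) + m := by
      have h2 := Nat.mod_lt k hm0
      calc k = m * (k / m) + k % m := (Nat.div_add_mod k m).symm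
      _ < m * (k / m) + m := Nat.add_lt_add_left h2 _
    exact_mod_cast h1
  have hx : (1 / ((rb : ℝ) + 1)) * (k : ℝ) - 1 ≤ ((k / m : ℕ) : ℝ) := by
    rw [sub_le_iff_le_add, ← hmR]
    rw [one_div, inv_mul_le_iff₀ (by positivity : (0:ℝ) < (m:ℝ))]
    rw [mul_add, mul_one]
    linarith
  have hrhs : Cbar * ρbar ^ k = (1 - θ) ^ ((1 / ((rb : ℝ) + 1)) * (k : ℝ) - 1) := by
    rw [hCbar, hρbar]
    rw [← Real.rpow_natCast ((1 - θ) ^ ((1:ℝ) / ((rb:ℝ) + 1))) k,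
      ← Real.rpow_mul hb0.le]
    rw [← Real.rpow_neg_one (1 - θ), ← Real.rpow_add hb0]
    congr 1
    ring
  calc (2⁻¹ : ℝ) * ∑ y', |(Q ^ k) y y' - μπ y'| = 2⁻¹ * f k := rfl
  _ ≤ 2⁻¹ * (2 * (1 - θ) ^ (k / m)) := by
      refine mul_le_mul_of_nonneg_left hfk (by norm_num)
  _ = (1 - θ) ^ (k / m) := by ring
  _ = (1 - θ) ^ (((k / m : ℕ) : ℝ)) := (Real.rpow_natCast _ _).symm
  _ ≤ (1 - θ) ^ ((1 / ((rb : ℝ) + 1)) * (k : ℝ) - 1) :=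
      Real.rpow_le_rpow_of_exponent_ge hb0 hb1.le hx
  _ = Cbar * ρbar ^ k := hrhs.symm

end
end

section
/- Let π_b be a policy, let μ_{π_b} be a probability vector on S that is a stationary distribution of the induced state chain P_{π_b}, and suppose there are an integer r_b ≥ 1 and δ_b ∈ (0,1] such that the lazy matrix 𝒫_{π_b} = (P_{π_b} + I)/2 satisfies (𝒫_{π_b})^{r_b}(s,s') ≥ δ_b for all s, s' ∈ S. Define μ̄_{π_b}(s,a) := μ_{π_b}(s) π_b(a|s). Then the lazy state–action matrix 𝒫̄_{π_b} = (P̄_{π_b} + I)/2 satisfies (𝒫̄_{π_b})^{r_b+1}((s,a),(s',a')) ≥ (δ_b/2) μ̄_{π_b}(s',a') for all (s,a), (s',a') ∈ S × A. -/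
section

variable {S A : Type*} [Fintype S] [Fintype A] [Nonempty S] [Nonempty A]
  [DecidableEq S] [DecidableEq A]

/-- Doeblin-type minorization for the lazy state–action chain of `π_b`:
`(𝒫̄_{π_b})^{r_b+1}((s,a),(s',a')) ≥ (δ_b/2) μ̄_{π_b}(s',a')`. -/
theorem stmt_11
    (p : S × A → S → ℝ)
    (hp0 : ∀ sa s', 0 ≤ p sa s')
    (hp1 : ∀ sa, ∑ s', p sa s' = 1)
    (πb : S → A → ℝ)
    (hπb0 : ∀ s a, 0 ≤ πb s a) (hπb1 : ∀ s, ∑ a, πb s a = 1)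
    (μb : S → ℝ) (hμb0 : ∀ s, 0 ≤ μb s) (hμb1 : ∑ s, μb s = 1)
    (hstatb : ∀ s', ∑ s, μb s * inducedChain p πb s s' = μb s')
    (rb : ℕ) (hrb : 1 ≤ rb)
    (δb : ℝ) (hδb0 : 0 < δb) (hδb1 : δb ≤ 1)
    (hδ : ∀ s s' : S, δb ≤ (lazy (inducedChain p πb) ^ rb) s s') :
    ∀ y y' : S × A,
      δb / 2 * (μb y'.1 * πb y'.1 y'.2) ≤
        (lazy (saChain p πb) ^ (rb + 1)) y y' := by
  classical
  set P : Matrix S S ℝ := inducedChain p πb with hP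
  set Pb : Matrix (S × A) (S × A) ℝ := saChain p πb with hPb
  set Q : Matrix S S ℝ := lazy P with hQ
  set Qb : Matrix (S × A) (S × A) ℝ := lazy Pb with hQb
  set B : Matrix (S × A) S ℝ := Matrix.of (fun y s' => p y s') with hBdef
  set C : Matrix S (S × A) ℝ :=
    Matrix.of (fun s y' => if s = y'.1 then πb y'.1 y'.2 else 0) with hCdef
  have hCB : C * B = P := by
    ext s s'
    simp [Matrix.mul_apply, hBdef, hCdef, hP, inducedChain, Fintype.sum_prod_type,
      Finset.sum_ite_eq, Finset.mul_sum]
  have hBC : B * C = Pb := by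
    ext y y'
    simp [Matrix.mul_apply, hBdef, hCdef, hPb, saChain, Finset.sum_ite_eq']
  -- intertwining: Qb * B = B * Q
  have hint : Qb * B = B * Q := by
    rw [hQb, hQ, lazy, lazy, Matrix.smul_mul, Matrix.mul_smul]
    congr 1
    rw [Matrix.add_mul, Matrix.mul_add, Matrix.one_mul, Matrix.mul_one, ← hBC,
      Matrix.mul_assoc, hCB]
  -- nonnegativity of Qb entries
  have hQb0 : ∀ y y' : S × A, 0 ≤ Qb y y' := by
    intro y y'
    have : Qb y y' = 2⁻¹ * (Pb y y' + (1 : Matrix (S × A) (S × A) ℝ) y y') := by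
      simp [hQb, lazy, mul_add]
    rw [this]
    have h1 : (0:ℝ) ≤ Pb y y' := mul_nonneg (hp0 _ _) (hπb0 _ _)
    have h2 : (0:ℝ) ≤ (1 : Matrix (S × A) (S × A) ℝ) y y' := by
      by_cases h : y = y' <;> simp [Matrix.one_apply, h]
    positivity
  -- key induction
  have key : ∀ n : ℕ, ∀ y y' : S × A,
      (2⁻¹ : ℝ) * (B * Q ^ n * C) y y' ≤ (Qb ^ (n + 1)) y y' := by
    intro n
    induction n with
    | zero =>
      intro y y'
      have h1 : (1 : Matrix (S × A) (S × A) ℝ) y y' = if y = y' then 1 else 0 :=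
        Matrix.one_apply
      have h2 : (0:ℝ) ≤ (1 : Matrix (S × A) (S × A) ℝ) y y' := by
        by_cases h : y = y' <;> simp [Matrix.one_apply, h]
      simp only [pow_zero, Matrix.mul_one, hBC, zero_add, pow_one]
      have hQbe : Qb y y' = 2⁻¹ * (Pb y y' + (1 : Matrix (S × A) (S × A) ℝ) y y') := by
        simp [hQb, lazy, mul_add]
      rw [hQbe]
      nlinarith
    | succ n ih =>
      intro y y'
      have hstep : (Qb ^ (n + 2)) y y' = ∑ z, Qb y z * (Qb ^ (n + 1)) z y' := by
        rw [pow_succ']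
        simp [Matrix.mul_apply]
      rw [hstep]
      have h1 : ∑ z, Qb y z * ((2⁻¹ : ℝ) * (B * Q ^ n * C) z y')
          ≤ ∑ z, Qb y z * (Qb ^ (n + 1)) z y' :=
        Finset.sum_le_sum fun z _ =>
          mul_le_mul_of_nonneg_left (ih z y') (hQb0 y z)
      refine le_trans (le_of_eq ?_) h1
      have : ∑ z, Qb y z * ((2⁻¹ : ℝ) * (B * Q ^ n * C) z y')
          = (2⁻¹ : ℝ) * (Qb * (B * Q ^ n * C)) y y' := by
        rw [Matrix.mul_apply, Finset.mul_sum]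
        apply Finset.sum_congr rfl
        intro z _
        ring
      rw [this]
      congr 1
      have : Qb * (B * Q ^ n * C) = B * Q ^ (n + 1) * C := by
        rw [← Matrix.mul_assoc, ← Matrix.mul_assoc, hint, Matrix.mul_assoc B Q,
          ← pow_succ']
      rw [this]
  intro y y'
  refine le_trans ?_ (key rb y y')
  -- compute (B * Q^rb * C) y y'
  have hBQC : (B * Q ^ rb * C) y y' = (B * Q ^ rb) y y'.1 * πb y'.1 y'.2 := by
    rw [Matrix.mul_apply]
    rw [show ∑ u, (B * Q ^ rb) y u * C u y'
        = ∑ u, if u = y'.1 then (B * Q ^ rb) y u * πb y'.1 y'.2 else 0 from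
      Finset.sum_congr rfl fun u _ => by
        by_cases h : u = y'.1 <;> simp [hCdef, h]]
    simp
  have hBQ : δb ≤ (B * Q ^ rb) y y'.1 := by
    rw [Matrix.mul_apply]
    calc δb = ∑ t, p y t * δb := by
          rw [← Finset.sum_mul, hp1, one_mul]
      _ ≤ ∑ t, B y t * (Q ^ rb) t y'.1 :=
          Finset.sum_le_sum fun t _ =>
            mul_le_mul_of_nonneg_left (hδ t y'.1) (hp0 _ _)
  have hμ1 : μb y'.1 ≤ 1 := by
    rw [← hμb1]
    exact Finset.single_le_sum (fun s _ => hμb0 s) (Finset.mem_univ _)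
  have hπ := hπb0 y'.1 y'.2
  have hμ := hμb0 y'.1
  calc δb / 2 * (μb y'.1 * πb y'.1 y'.2)
      ≤ δb / 2 * (1 * πb y'.1 y'.2) := by
        apply mul_le_mul_of_nonneg_left (mul_le_mul_of_nonneg_right hμ1 hπ)
        positivity
    _ = (2⁻¹ : ℝ) * (δb * πb y'.1 y'.2) := by ring
    _ ≤ (2⁻¹ : ℝ) * ((B * Q ^ rb) y y'.1 * πb y'.1 y'.2) := by
        apply mul_le_mul_of_nonneg_left (mul_le_mul_of_nonneg_right hBQ hπ)
        norm_num
    _ = (2⁻¹ : ℝ) * (B * Q ^ rb * C) y y' := by rw [hBQC]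

end
end

section
/- Let π_b be a policy, let μ_{π_b} be a stationary distribution of the induced state chain P_{π_b} with μ_{π_b,min} := min_s μ_{π_b}(s), and suppose there are an integer r_b ≥ 1 and δ_b ∈ (0,1] such that the lazy matrix 𝒫_{π_b} = (P_{π_b} + I)/2 satisfies (𝒫_{π_b})^{r_b}(s,s') ≥ δ_b for all s, s' ∈ S. Let π be any policy with π_min := min_{s,a} π(a|s) > 0 and let μ_π be a stationary distribution of the induced state chain P_π. Then μ_π(s) ≥ π_min^{r_b} δ_b μ_{π_b,min} for every s ∈ S. -/
section

variable {S A : Type*} [Fintype S] [Fintype A] [Nonempty S] [Nonempty A]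
  [DecidableEq S]

lemma pow_entry_bound {X : Type*} [Fintype X] [DecidableEq X]
    (A B : Matrix X X ℝ) (c : ℝ) (hc : 0 ≤ c)
    (hB : ∀ i j, 0 ≤ B i j) (hA : ∀ i j, 0 ≤ A i j)
    (h : ∀ i j, c * B i j ≤ A i j) (n : ℕ) :
    (∀ i j, 0 ≤ (B ^ n) i j) ∧ (∀ i j, c ^ n * (B ^ n) i j ≤ (A ^ n) i j) := by
  induction n with
  | zero =>
      refine ⟨fun i j => ?_, fun i j => ?_⟩
      · simp only [pow_zero, Matrix.one_apply]; split <;> norm_num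
      · simp [Matrix.one_apply]
  | succ n ih =>
      obtain ⟨ihB, ihle⟩ := ih
      have hAn : ∀ i j, 0 ≤ (A ^ n) i j := by
        intro i j
        calc (0:ℝ) ≤ c ^ n * (B ^ n) i j :=
            mul_nonneg (pow_nonneg hc n) (ihB i j)
          _ ≤ (A ^ n) i j := ihle i j
      constructor
      · intro i j
        rw [pow_succ, Matrix.mul_apply]
        exact Finset.sum_nonneg fun k _ => mul_nonneg (ihB i k) (hB k j)
      · intro i j
        have hA' : (A ^ (n+1)) i j = ∑ k, (A ^ n) i k * A k j := by
          rw [pow_succ, Matrix.mul_apply]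
        have hB' : (B ^ (n+1)) i j = ∑ k, (B ^ n) i k * B k j := by
          rw [pow_succ, Matrix.mul_apply]
        rw [hA', hB', Finset.mul_sum]
        apply Finset.sum_le_sum
        intro k _
        have : c ^ (n + 1) * ((B ^ n) i k * B k j)
            = (c ^ n * (B ^ n) i k) * (c * B k j) := by ring
        rw [this]
        exact mul_le_mul (ihle i k) (h k j) (mul_nonneg hc (hB k j)) (hAn i k)

lemma stat_pow {X : Type*} [Fintype X] [DecidableEq X] (M : Matrix X X ℝ) (μ : X → ℝ)
    (h : ∀ s', ∑ s, μ s * M s s' = μ s') (n : ℕ) :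
    ∀ s', ∑ s, μ s * (M ^ n) s s' = μ s' := by
  induction n with
  | zero => intro s'; simp [Matrix.one_apply, mul_ite, Finset.sum_ite_eq']
  | succ n ih =>
      intro s'
      calc ∑ t, μ t * (M ^ (n+1)) t s'
          = ∑ t, ∑ k, μ t * ((M ^ n) t k * M k s') := by
            simp only [pow_succ, Matrix.mul_apply, Finset.mul_sum]
        _ = ∑ k, (∑ t, μ t * (M ^ n) t k) * M k s' := by
            rw [Finset.sum_comm]
            refine Finset.sum_congr rfl fun k _ => ?_
            rw [Finset.sum_mul]
            exact Finset.sum_congr rfl fun t _ => by ring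
        _ = ∑ k, μ k * M k s' := by simp_rw [ih]
        _ = μ s' := h s'

/-- Lower bound on stationary probabilities of the chain induced by any
strictly positive policy: `μ_π(s) ≥ π_min^{r_b} δ_b μ_{π_b,min}`. -/
theorem stmt_12
    (p : S × A → S → ℝ)
    (hp0 : ∀ sa s', 0 ≤ p sa s')
    (hp1 : ∀ sa, ∑ s', p sa s' = 1)
    (πb : S → A → ℝ)
    (hπb0 : ∀ s a, 0 ≤ πb s a) (hπb1 : ∀ s, ∑ a, πb s a = 1)
    (μb : S → ℝ) (hμb0 : ∀ s, 0 ≤ μb s) (hμb1 : ∑ s, μb s = 1)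
    (hstatb : ∀ s', ∑ s, μb s * inducedChain p πb s s' = μb s')
    (rb : ℕ) (hrb : 1 ≤ rb)
    (δb : ℝ) (hδb0 : 0 < δb) (hδb1 : δb ≤ 1)
    (hδ : ∀ s s' : S, δb ≤ (lazy (inducedChain p πb) ^ rb) s s')
    (π : S → A → ℝ)
    (hπ0 : ∀ s a, 0 < π s a) (hπ1 : ∀ s, ∑ a, π s a = 1)
    (μ : S → ℝ) (hμ0 : ∀ s, 0 ≤ μ s) (hμ1 : ∑ s, μ s = 1)
    (hstat : ∀ s', ∑ s, μ s * inducedChain p π s s' = μ s') :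
    ∀ s : S,
      (Finset.univ.inf' Finset.univ_nonempty fun sa : S × A => π sa.1 sa.2) ^ rb *
          δb * (Finset.univ.inf' Finset.univ_nonempty fun s => μb s) ≤ μ s := by
  intro s
  set c : ℝ := Finset.univ.inf' Finset.univ_nonempty fun sa : S × A => π sa.1 sa.2
    with hc_def
  set m : ℝ := Finset.univ.inf' Finset.univ_nonempty fun s => μb s with hm_def
  have hc_le : ∀ s a, c ≤ π s a := fun s a =>
    Finset.inf'_le _ (Finset.mem_univ ((s, a) : S × A))
  have hc0 : 0 < c := by
    obtain ⟨sa, _, hsa⟩ := Finset.exists_mem_eq_inf' (Finset.univ_nonempty)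
      (fun sa : S × A => π sa.1 sa.2)
    rw [hc_def, hsa]; exact hπ0 _ _
  have hπle1 : ∀ s a, π s a ≤ 1 := by
    intro s a
    calc π s a ≤ ∑ a', π s a' :=
      Finset.single_le_sum (fun a' _ => (hπ0 s a').le) (Finset.mem_univ a)
      _ = 1 := hπ1 s
  have hπble1 : ∀ s a, πb s a ≤ 1 := by
    intro s a
    calc πb s a ≤ ∑ a', πb s a' :=
      Finset.single_le_sum (fun a' _ => hπb0 s a') (Finset.mem_univ a)
      _ = 1 := hπb1 s
  have hc1 : c ≤ 1 := (hc_le s (Classical.arbitrary A)).trans (hπle1 _ _)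
  -- m ≤ 1
  have hm0 : 0 ≤ m := by
    obtain ⟨s0, _, hs0⟩ := Finset.exists_mem_eq_inf' (Finset.univ_nonempty)
      (fun s => μb s)
    rw [hm_def, hs0]; exact hμb0 _
  have hm1 : m ≤ 1 := by
    have := Finset.inf'_le (fun s => μb s)
      (Finset.mem_univ (Classical.arbitrary S))
    refine (this.trans ?_)
    calc μb _ ≤ ∑ s', μb s' :=
      Finset.single_le_sum (fun s' _ => hμb0 s') (Finset.mem_univ _)
      _ = 1 := hμb1
  -- entrywise bound on lazy matrices
  set Pb := inducedChain p πb with hPb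
  set P := inducedChain p π with hP
  have hPb0 : ∀ i j, 0 ≤ Pb i j := fun i j =>
    Finset.sum_nonneg fun a _ => mul_nonneg (hπb0 i a) (hp0 _ _)
  have hP0 : ∀ i j, 0 ≤ P i j := fun i j =>
    Finset.sum_nonneg fun a _ => mul_nonneg (hπ0 i a).le (hp0 _ _)
  have hPcomp : ∀ i j, c * Pb i j ≤ P i j := by
    intro i j
    have : c * Pb i j = ∑ a, (c * πb i a) * p (i, a) j := by
      simp [hPb, inducedChain, Finset.mul_sum, mul_assoc]
    rw [this]
    apply Finset.sum_le_sum
    intro a _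
    apply mul_le_mul_of_nonneg_right _ (hp0 _ _)
    calc c * πb i a ≤ c * 1 := by
          exact mul_le_mul_of_nonneg_left (hπble1 i a) hc0.le
      _ = c := mul_one c
      _ ≤ π i a := hc_le i a
  have hLb0 : ∀ i j, 0 ≤ lazy Pb i j := by
    intro i j
    simp only [lazy, Matrix.smul_apply, Matrix.add_apply, Matrix.one_apply,
      smul_eq_mul]
    have h1 : (0:ℝ) ≤ (if i = j then (1:ℝ) else 0) := by split <;> norm_num
    linarith [hPb0 i j]
  have hL0 : ∀ i j, 0 ≤ lazy P i j := by
    intro i j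
    simp only [lazy, Matrix.smul_apply, Matrix.add_apply, Matrix.one_apply,
      smul_eq_mul]
    have h1 : (0:ℝ) ≤ (if i = j then (1:ℝ) else 0) := by split <;> norm_num
    linarith [hP0 i j]
  have hLcomp : ∀ i j, c * lazy Pb i j ≤ lazy P i j := by
    intro i j
    simp only [lazy, Matrix.smul_apply, Matrix.add_apply, Matrix.one_apply,
      smul_eq_mul]
    have h1 : c * (if i = j then (1:ℝ) else 0) ≤ (if i = j then (1:ℝ) else 0) := by
      split
      · simpa using hc1
      · simp
    have h2 := hPcomp i j
    have h3 : c * (if i = j then (1:ℝ) else 0) ≤ c * if i = j then (1:ℝ) else 0 :=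
      le_refl _
    nlinarith [hPb0 i j]
  obtain ⟨hBn, hpow⟩ := pow_entry_bound (lazy P) (lazy Pb) c hc0.le hLb0 hL0
    hLcomp rb
  -- stationarity of μ for lazy P
  have hstatL : ∀ s', ∑ t, μ t * lazy P t s' = μ s' := by
    intro s'
    simp only [lazy, Matrix.smul_apply, Matrix.add_apply, Matrix.one_apply,
      smul_eq_mul]
    have expand : ∀ t, μ t * (2⁻¹ * (P t s' + if t = s' then (1:ℝ) else 0))
        = 2⁻¹ * (μ t * P t s') + 2⁻¹ * (μ t * if t = s' then (1:ℝ) else 0) :=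
      fun t => by ring
    simp_rw [expand]
    rw [Finset.sum_add_distrib, ← Finset.mul_sum, ← Finset.mul_sum, hstat s']
    have : (∑ t, μ t * if t = s' then (1:ℝ) else 0) = μ s' := by
      simp [Finset.sum_ite_eq']
    rw [this]; ring
  have hstatLn := stat_pow (lazy P) μ hstatL rb s
  -- main estimate
  have key : c ^ rb * δb ≤ μ s := by
    calc c ^ rb * δb = ∑ t, μ t * (c ^ rb * δb) := by
          rw [← Finset.sum_mul, hμ1, one_mul]
      _ ≤ ∑ t, μ t * (lazy P ^ rb) t s := by
          apply Finset.sum_le_sum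
          intro t _
          apply mul_le_mul_of_nonneg_left _ (hμ0 t)
          calc c ^ rb * δb ≤ c ^ rb * (lazy Pb ^ rb) t s := by
                exact mul_le_mul_of_nonneg_left (hδ t s) (by positivity)
            _ ≤ (lazy P ^ rb) t s := hpow t s
      _ = μ s := hstatLn
  calc c ^ rb * δb * m ≤ c ^ rb * δb * 1 := by
        apply mul_le_mul_of_nonneg_left hm1 (by positivity)
    _ = c ^ rb * δb := mul_one _
    _ ≤ μ s := key

end
end
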